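/- Every bounded semilinear language is in ℒ(NCM(BD_iLB_d)) and in ℒ(NCM(LB_iBD_d)). -/

import Mathlib

set_option maxHeartbeats 1000000

/-! ### Basic machinery: counter machines, instruction languages, language families -/

/-- The instruction alphabet `Δ_k = {C_1, D_1, …, C_k, D_k}`. -/
inductive Instr (k : ℕ) : Type
  | C : Fin k → Instr k
  | D : Fin k → Instr k
deriving DecidableEq

namespace Instr

/-- `x` is an increment symbol `C_i` (i.e. belongs to `Δ_(k,c)`). -/
def isInc {k : ℕ} : Instr k → Prop
  | C _ => True
  | D _ => False

/-- `x` is a decrement symbol `D_i` (i.e. belongs to `Δ_(k,d)`). -/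
def isDec {k : ℕ} : Instr k → Prop
  | C _ => False
  | D _ => True

end Instr

/-- A transition of a one-way nondeterministic `k`-counter machine with `n` states
over input alphabet `A`.  `test i = true` means the transition requires counter `i`
to be positive, `test i = false` requires it to be zero.  `delta` gives the counter
changes (each in `{-1,0,1}`). -/
structure CTrans (k n : ℕ) (A : Type) where
  src : Fin n
  input : Option A
  test : Fin k → Bool
  dst : Fin n
  delta : Fin k → ℤ

/-- A one-way nondeterministic `k`-counter machine. -/
structure NCMachine (k : ℕ) (A : Type) where
  n : ℕ
  start : Fin n
  final : Set (Fin n)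
  trans : Set (CTrans k n A)

namespace NCMachine

variable {k : ℕ} {A : Type}

/-- Configurations: current state, remaining input, counter contents. -/
abbrev Config (M : NCMachine k A) : Type := Fin M.n × List A × (Fin k → ℕ)

/-- A single computation step using transition `t`. -/
def Step (M : NCMachine k A) (t : CTrans k M.n A) (c c' : M.Config) : Prop :=
  t ∈ M.trans ∧ c.1 = t.src ∧ c'.1 = t.dst ∧
    (∀ i, t.test i = true ↔ 0 < c.2.2 i) ∧
    (∀ i, t.delta i = -1 ∨ t.delta i = 0 ∨ t.delta i = 1) ∧
    (∀ i, (c'.2.2 i : ℤ) = (c.2.2 i : ℤ) + t.delta i) ∧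
    (match t.input with
      | none => c'.2.1 = c.2.1
      | some a => c.2.1 = a :: c'.2.1)

/-- Derivation along a list of transitions. -/
def Derives (M : NCMachine k A) : List (CTrans k M.n A) → M.Config → M.Config → Prop
  | [], c, c' => c' = c
  | t :: ts, c, c'' => ∃ c', M.Step t c c' ∧ M.Derives ts c' c''

/-- The initial configuration on input `w`. -/
def initConfig (M : NCMachine k A) (w : List A) : M.Config :=
  (M.start, w, fun _ => 0)

/-- `ts` is a computation of `M` accepting `w` (ending in a final state with the
input consumed). -/
def Accepts (M : NCMachine k A) (ts : List (CTrans k M.n A)) (w : List A) : Prop :=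
  ∃ (q : Fin M.n) (cnt : Fin k → ℕ), q ∈ M.final ∧ M.Derives ts (M.initConfig w) (q, [], cnt)

/-- `ts` is a computation of `M` accepting `w` ending with all counters zero. -/
def AcceptsZ (M : NCMachine k A) (ts : List (CTrans k M.n A)) (w : List A) : Prop :=
  ∃ q : Fin M.n, q ∈ M.final ∧ M.Derives ts (M.initConfig w) (q, [], fun _ => 0)

/-- The language accepted by `M`. -/
def lang (M : NCMachine k A) : Language A := {w | ∃ ts, M.Accepts ts w}

end NCMachine

/-- The instruction recorded by a single transition: `C_i` for an increment of
counter `i`, `D_i` for a decrement of counter `i`, nothing otherwise. -/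
def CTrans.instr {k n : ℕ} {A : Type} (t : CTrans k n A) : List (Instr k) :=
  ((List.finRange k).map fun i =>
    if t.delta i = 1 then [Instr.C i] else if t.delta i = -1 then [Instr.D i] else []).flatten

/-- The homomorphism `h_Δ` recording the counter instructions of a transition sequence. -/
def hDelta {k n : ℕ} {A : Type} (ts : List (CTrans k n A)) : List (Instr k) :=
  (ts.map CTrans.instr).flatten

/-- The homomorphism `h_Σ` recording the input letters read by a transition sequence. -/
def hSigma {k n : ℕ} {A : Type} (ts : List (CTrans k n A)) : List A :=
  ts.filterMap CTrans.input

/-- In `w`, for every `i`, every occurrence of `C_i` precedes every occurrence of `D_i`. -/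
def IncBeforeDec {k : ℕ} (w : List (Instr k)) : Prop :=
  ∀ (i : Fin k) (x y z : List (Instr k)), w ≠ x ++ Instr.D i :: (y ++ Instr.C i :: z)

/-- A `k`-counter machine is *well-formed* if every transition changes at most one
counter, and in every accepting computation all counters finish at zero and each
counter is 1-reversal-bounded (all increments precede all decrements). -/
def NCMachine.WellFormed {k : ℕ} {A : Type} (M : NCMachine k A) : Prop :=
  (∀ t ∈ M.trans, ∀ i j : Fin k, t.delta i ≠ 0 → t.delta j ≠ 0 → i = j) ∧
  (∀ (w : List A) (ts : List (CTrans k M.n A)) (q : Fin M.n) (cnt : Fin k → ℕ),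
      q ∈ M.final → M.Derives ts (M.initConfig w) (q, [], cnt) →
      cnt = (fun _ => 0) ∧ IncBeforeDec (hDelta ts))

/-- `M` satisfies the instruction language `I` if every accepting computation has its
instruction sequence in `I`. -/
def NCMachine.Satisfies {k : ℕ} {A : Type} (M : NCMachine k A) (I : Language (Instr k)) : Prop :=
  ∀ (w : List A) (ts : List (CTrans k M.n A)), M.AcceptsZ ts w → hDelta ts ∈ I

/-! ### Language families, full trios -/

/-- A family of languages: for every alphabet, a set of languages over it. -/
abbrev LangFamily : Type 1 := ∀ A : Type, Set (Language A)

/-- The extension of a map `h : A → List B` to a (monoid) homomorphism on words. -/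
def homWord {A B : Type} (h : A → List B) (w : List A) : List B := (w.map h).flatten


/-- Intersection of two languages. -/
def interLang {A : Type} (L R : Language A) : Language A := {w | w ∈ L ∧ w ∈ R}

/-- Union of two languages. -/
def unionLang {A : Type} (L R : Language A) : Language A := {w | w ∈ L ∨ w ∈ R}

/-- `L` is a regular language. -/
def RegularLang {A : Type} (L : Language A) : Prop :=
  ∃ (n : ℕ) (M : DFA A (Fin n)), L = M.accepts

/-- A full trio: a family of languages closed under homomorphism, inverse
homomorphism, and intersection with regular languages. -/
structure IsFullTrio (F : LangFamily) : Prop where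
  hom_mem : ∀ (A B : Type) (h : A → List B) (L : Language A),
      L ∈ F A → (homWord h '' L) ∈ F B
  invHom_mem : ∀ (A B : Type) (h : A → List B) (L : Language B),
      L ∈ F B → (homWord h ⁻¹' L) ∈ F A
  interReg_mem : ∀ (A : Type) (L R : Language A),
      L ∈ F A → RegularLang R → interLang L R ∈ F A

/-- A full semi-AFL: a full trio closed under union. -/
def IsFullSemiAFL (F : LangFamily) : Prop :=
  IsFullTrio F ∧ ∀ (A : Type) (L₁ L₂ : Language A), L₁ ∈ F A → L₂ ∈ F A → unionLang L₁ L₂ ∈ F A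

/-- `F` is the smallest full trio containing (every language of every alphabet in) `G`. -/
def IsSmallestFullTrioOver (F G : LangFamily) : Prop :=
  IsFullTrio F ∧ (∀ A : Type, G A ⊆ F A) ∧
    ∀ F' : LangFamily, IsFullTrio F' → (∀ A : Type, G A ⊆ F' A) → ∀ A : Type, F A ⊆ F' A

/-- Closure under intersection. -/
def IntersectionClosed (F : LangFamily) : Prop :=
  ∀ (A : Type) (L₁ L₂ : Language A), L₁ ∈ F A → L₂ ∈ F A → interLang L₁ L₂ ∈ F A

/-- `w` is a shuffle of `u` and `v`. -/
inductive IsShuffle {A : Type} : List A → List A → List A → Prop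
  | nil : IsShuffle [] [] []
  | left {a : A} {u v w : List A} : IsShuffle u v w → IsShuffle (a :: u) v (a :: w)
  | right {a : A} {u v w : List A} : IsShuffle u v w → IsShuffle u (a :: v) (a :: w)

/-- The shuffle of two languages. -/
def shuffleLang {A : Type} (L₁ L₂ : Language A) : Language A :=
  {w | ∃ u ∈ L₁, ∃ v ∈ L₂, IsShuffle u v w}

/-- Closure under shuffle. -/
def ShuffleClosed (F : LangFamily) : Prop :=
  ∀ (A : Type) (L₁ L₂ : Language A), L₁ ∈ F A → L₂ ∈ F A → shuffleLang L₁ L₂ ∈ F A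

/-! ### Bounded-language builders -/

/-- The word `a₁^{n₁} ⋯ a_m^{n_m}`. -/
def lettersPow {A : Type} (as : List A) (ns : Fin as.length → ℕ) : List A :=
  (List.ofFn fun j => List.replicate (ns j) (as.get j)).flatten

/-- The letter-bounded language `a₁^* ⋯ a_m^*`. -/
def letterLang {A : Type} (as : List A) : Language A :=
  {w | ∃ ns : Fin as.length → ℕ, w = lettersPow as ns}

/-- The word `w₁^{n₁} ⋯ w_m^{n_m}`. -/
def wordsPow {A : Type} (ws : List (List A)) (ns : Fin ws.length → ℕ) : List A :=
  (List.ofFn fun j => (List.replicate (ns j) (ws.get j)).flatten).flatten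

/-- The bounded language `w₁^* ⋯ w_m^*`. -/
def boundedLang {A : Type} (ws : List (List A)) : Language A :=
  {w | ∃ ns : Fin ws.length → ℕ, w = wordsPow ws ns}

/-- All words over the increment sub-alphabet `Δ_(k,c)`. -/
def incWords {k : ℕ} : Language (Instr k) := {w | ∀ a ∈ w, a.isInc}

/-- All words over the decrement sub-alphabet `Δ_(k,d)`. -/
def decWords {k : ℕ} : Language (Instr k) := {w | ∀ a ∈ w, a.isDec}

/-- Every word of `I` has all `C_i` before any `D_i`. -/
def AllIncBeforeDec {k : ℕ} (I : Language (Instr k)) : Prop := ∀ w ∈ I, IncBeforeDec w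

/-! ### Instruction language families -/

/-- A family of instruction languages (one set of languages over `Δ_k` for each `k`). -/
abbrev InstrFam : Type := ∀ k : ℕ, Set (Language (Instr k))

/-- The stratified condition on a sequence of letters of `Δ_k`. -/
def Stratified {k : ℕ} (as : List (Instr k)) : Prop :=
  ∀ (l l' j j' : Fin as.length) (r s : Fin k),
    l < l' → l' < j → j < j' →
    as.get l = Instr.C r → as.get l' = Instr.C s →
    as.get j = Instr.D r → as.get j' = Instr.D s → r = s

/-- Letter-bounded instruction languages `LB`. -/
def famLB : InstrFam := fun k =>
  {I | (∃ as : List (Instr k), I = letterLang as) ∧ AllIncBeforeDec I}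

/-- Stratified letter-bounded instruction languages `StLB`. -/
def famStLB : InstrFam := fun k =>
  {I | (∃ as : List (Instr k), Stratified as ∧ I = letterLang as) ∧ AllIncBeforeDec I}

/-- Letter-bounded-increasing/letter-bounded-decreasing instruction languages `LB_iLB_d`. -/
def famLBiLBd : InstrFam := fun k =>
  {I | (∃ as bs : List (Instr k), (∀ a ∈ as, a.isInc) ∧ (∀ b ∈ bs, b.isDec) ∧
        I = letterLang as * letterLang bs) ∧ AllIncBeforeDec I}

/-- Bounded instruction languages `BD`. -/
def famBD : InstrFam := fun k =>
  {I | (∃ ws : List (List (Instr k)), I = boundedLang ws) ∧ AllIncBeforeDec I}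

/-- Bounded-increasing/letter-bounded-decreasing instruction languages `BD_iLB_d`. -/
def famBDiLBd : InstrFam := fun k =>
  {I | (∃ (ws : List (List (Instr k))) (bs : List (Instr k)),
        (∀ u ∈ ws, ∀ a ∈ u, a.isInc) ∧ (∀ b ∈ bs, b.isDec) ∧
        I = boundedLang ws * letterLang bs) ∧ AllIncBeforeDec I}

/-- Letter-bounded-increasing/bounded-decreasing instruction languages `LB_iBD_d`. -/
def famLBiBDd : InstrFam := fun k =>
  {I | (∃ (as : List (Instr k)) (ws : List (List (Instr k))),
        (∀ a ∈ as, a.isInc) ∧ (∀ u ∈ ws, ∀ b ∈ u, b.isDec) ∧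
        I = letterLang as * boundedLang ws) ∧ AllIncBeforeDec I}

/-- Letter-bounded-decreasing instruction languages `LB_d`. -/
def famLBd : InstrFam := fun k =>
  {I | (∃ bs : List (Instr k), (∀ b ∈ bs, b.isDec) ∧
        I = shuffleLang incWords (letterLang bs)) ∧ AllIncBeforeDec I}

/-- Letter-bounded-increasing instruction languages `LB_i`. -/
def famLBi : InstrFam := fun k =>
  {I | (∃ as : List (Instr k), (∀ a ∈ as, a.isInc) ∧
        I = shuffleLang (letterLang as) decWords) ∧ AllIncBeforeDec I}

/-- `LB_∪ = LB_d ∪ LB_i`. -/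
def famLBcup : InstrFam := fun k => famLBd k ∪ famLBi k

/-- The unrestricted instruction family `ALL = {Δ_k^*}`. -/
def famALL : InstrFam := fun k => {I : Language (Instr k) | I = Set.univ}

/-! #### Underlined ("distinct") variants -/

/-- `u-LB`: each letter of `Δ_k` occurs exactly once. -/
def famULB : InstrFam := fun k =>
  {I | (∃ as : List (Instr k), (∀ x : Instr k, as.count x = 1) ∧ I = letterLang as) ∧
        AllIncBeforeDec I}

/-- `u-StLB`. -/
def famUStLB : InstrFam := fun k =>
  {I | (∃ as : List (Instr k), (∀ x : Instr k, as.count x = 1) ∧ Stratified as ∧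
        I = letterLang as) ∧ AllIncBeforeDec I}

/-- `u-LB_i u-LB_d`. -/
def famULBiULBd : InstrFam := fun k =>
  {I | (∃ as bs : List (Instr k),
        (∀ a ∈ as, a.isInc) ∧ (∀ i : Fin k, as.count (Instr.C i) = 1) ∧
        (∀ b ∈ bs, b.isDec) ∧ (∀ i : Fin k, bs.count (Instr.D i) = 1) ∧
        I = letterLang as * letterLang bs) ∧ AllIncBeforeDec I}

/-- `u-BD_i u-LB_d`. -/
def famUBDiULBd : InstrFam := fun k =>
  {I | (∃ (ws : List (List (Instr k))) (bs : List (Instr k)),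
        (∀ u ∈ ws, ∀ a ∈ u, a.isInc) ∧ (∀ i : Fin k, ws.flatten.count (Instr.C i) = 1) ∧
        (∀ b ∈ bs, b.isDec) ∧ (∀ i : Fin k, bs.count (Instr.D i) = 1) ∧
        I = boundedLang ws * letterLang bs) ∧ AllIncBeforeDec I}

/-- `u-LB_i u-BD_d`. -/
def famULBiUBDd : InstrFam := fun k =>
  {I | (∃ (as : List (Instr k)) (ws : List (List (Instr k))),
        (∀ a ∈ as, a.isInc) ∧ (∀ i : Fin k, as.count (Instr.C i) = 1) ∧
        (∀ u ∈ ws, ∀ b ∈ u, b.isDec) ∧ (∀ i : Fin k, ws.flatten.count (Instr.D i) = 1) ∧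
        I = letterLang as * boundedLang ws) ∧ AllIncBeforeDec I}

/-- `u-LB_d`. -/
def famULBd : InstrFam := fun k =>
  {I | (∃ bs : List (Instr k), (∀ b ∈ bs, b.isDec) ∧ (∀ i : Fin k, bs.count (Instr.D i) = 1) ∧
        I = shuffleLang incWords (letterLang bs)) ∧ AllIncBeforeDec I}

/-- `u-LB_i`. -/
def famULBi : InstrFam := fun k =>
  {I | (∃ as : List (Instr k), (∀ a ∈ as, a.isInc) ∧ (∀ i : Fin k, as.count (Instr.C i) = 1) ∧
        I = shuffleLang (letterLang as) decWords) ∧ AllIncBeforeDec I}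

/-- `SBD`: bounded instructions in which each word has length at most 2. -/
def famSBD : InstrFam := fun k =>
  {I | (∃ ws : List (List (Instr k)), (∀ u ∈ ws, u ≠ [] ∧ u.length ≤ 2) ∧
        I = boundedLang ws) ∧ AllIncBeforeDec I}

/-! ### The language families `ℒ(NCM(k,𝓘))` and `ℒ(NCM(𝓘))` -/

/-- Languages accepted by well-formed `k`-counter machines satisfying some `I ∈ 𝓘k`. -/
def NCMLangK (k : ℕ) (𝓘k : Set (Language (Instr k))) : LangFamily :=
  fun A => {L | ∃ M : NCMachine k A, M.WellFormed ∧ (∃ I ∈ 𝓘k, M.Satisfies I) ∧ M.lang = L}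

/-- Languages accepted by well-formed `𝓘`-instruction machines (over all `k ≥ 1`). -/
def NCMLang (𝓘 : InstrFam) : LangFamily :=
  fun A => {L | ∃ k : ℕ, 0 < k ∧ L ∈ NCMLangK k (𝓘 k) A}

/-- For `I ⊆ Δ_k^*`, the sub-language `I_eq` of words with equally many `C_i` as `D_i`
for each `i`, in which every `C_i` occurs before any `D_i`. -/
def eqPart {k : ℕ} (I : Language (Instr k)) : Language (Instr k) :=
  {w | w ∈ I ∧ (∀ i : Fin k, w.count (Instr.C i) = w.count (Instr.D i)) ∧ IncBeforeDec w}

/-! ### Reversal-bounded machines and `ℒ(NCM)` -/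

/-- The number of alternations between increasing and decreasing in a sequence of
counter changes. -/
def signChanges (ds : List ℤ) : ℕ :=
  let nz := ds.filter fun d => d != 0
  ((nz.zip nz.tail).filter fun p => decide (p.1 * p.2 < 0)).length

/-- `M` is reversal-bounded: in accepting computations each counter alternates between
nondecreasing and nonincreasing a bounded number of times. -/
def NCMachine.RevBounded {k : ℕ} {A : Type} (M : NCMachine k A) : Prop :=
  ∃ l : ℕ, ∀ (w : List A) (ts : List (CTrans k M.n A)), M.Accepts ts w →
    ∀ i : Fin k, signChanges (ts.map fun t => t.delta i) ≤ l

/-- `ℒ(NCM)`: languages of one-way nondeterministic reversal-bounded multicounter machines. -/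
def NCMFull : LangFamily :=
  fun A => {L | ∃ (k : ℕ) (M : NCMachine k A), M.RevBounded ∧ M.lang = L}

/-! ### Semilinear sets and bounded semilinear languages -/

/-- The linear set with constant `v0` and periods `ps`. -/
def linearSet {β : Type} (v0 : β → ℕ) (ps : List (β → ℕ)) : Set (β → ℕ) :=
  {v | ∃ c : Fin ps.length → ℕ, v = fun t => v0 t + ∑ j : Fin ps.length, c j * ps.get j t}

/-- `Q` is a semilinear set. -/
def IsSemilinear {β : Type} (Q : Set (β → ℕ)) : Prop :=
  ∃ comps : List ((β → ℕ) × List (β → ℕ)),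
    Q = {v | ∃ c ∈ comps, v ∈ linearSet c.1 c.2}

/-- `L` is a bounded (Ginsburg) semilinear language. -/
def IsBoundedSemilinear {A : Type} (L : Language A) : Prop :=
  ∃ ws : List (List A), (∀ u ∈ ws, u ≠ []) ∧
    ∃ Q : Set (Fin ws.length → ℕ), IsSemilinear Q ∧
      L = {w | ∃ v ∈ Q, w = wordsPow ws v}

/-- The Parikh image of a word. -/
noncomputable def parikh {A : Type} (w : List A) : A → ℕ :=
  fun a => Nat.card {j : Fin w.length // w.get j = a}

/-- `L` is a bounded Parikh semilinear language. -/
noncomputable def IsBoundedParikhSemilinear {A : Type} (L : Language A) : Prop :=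
  ∃ ws : List (List A), (∀ u ∈ ws, u ≠ []) ∧
    ∃ Q : Set (A → ℕ), IsSemilinear Q ∧
      L = {w | (∃ ns : Fin ws.length → ℕ, w = wordsPow ws ns) ∧ parikh w ∈ Q}

/-- The reversal of a language. -/
def revLang {A : Type} (L : Language A) : Language A := {w | w.reverse ∈ L}

/-!
A bounded semilinear language `{w₁^{v₁} ⋯ w_m^{v_m} | v ∈ Q}` is accepted with one counter per
word `w_t`. For `BD_i LB_d` the machine guesses a linear component `(v₀, P)` of `Q`, adds `v₀` and
then any number of periods `p ∈ P` to the counters (the increment words form a bounded language),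
and finally reads `w_t^{d_t}` for `t = 1, …, m`, decrementing counter `t` once per copy. Accepting
with all counters zero forces `d = v₀ + ∑ nⱼ pⱼ`, and since every increment precedes every
decrement no counter is ever asked to go negative. For `LB_i BD_d` the phases are swapped: it reads
`w_t^{d_t}` incrementing counter `t`, then subtracts `v₀` and the periods.

Both machines come from one construction: a finite automaton over the actions "read a letter" and
"apply an instruction" recognizing a union of products of words and starred words, run by a
counter machine that may enter its final state only through a test that all counters are zero.
-/

namespace List

variable {α β : Type*}

lemma reduceOption_cons (a : Option α) (l : List (Option α)) :
    (a :: l).reduceOption = a.toList ++ l.reduceOption := by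
  cases a <;> simp [reduceOption_cons_of_some, reduceOption_cons_of_none]

lemma reduceOption_map_some (u : List α) : (u.map some).reduceOption = u := by
  induction u with
  | nil => rfl
  | cons a u ih => simp [reduceOption_cons_of_some, ih]

lemma flatten_map_eq_of_ne {ι : Type*} {l : List ι} (hl : l.Nodup) {j : ι} (hj : j ∈ l)
    {f : ι → List β} (hf : ∀ i ∈ l, i ≠ j → f i = []) : (l.map f).flatten = f j := by
  induction l with
  | nil => cases hj
  | cons a l ih =>
    obtain ⟨ha, hl⟩ := nodup_cons.1 hl
    rw [map_cons, flatten_cons]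
    rcases mem_cons.1 hj with rfl | hj
    · rw [flatten_eq_nil_iff.2, append_nil]
      intro _ hx
      obtain ⟨i, hi, rfl⟩ := mem_map.1 hx
      exact hf i (mem_cons_of_mem _ hi) fun h => ha (h ▸ hi)
    · rw [hf a mem_cons_self fun h => ha (h ▸ hj), nil_append]
      exact ih hl hj fun i hi => hf i (mem_cons_of_mem _ hi)

end List

open Computability

section PowWord

variable {α : Type}

def powWord {m : ℕ} (u : Fin m → List α) (d : Fin m → ℕ) : List α :=
  (List.ofFn fun t => (List.replicate (d t) (u t)).flatten).flatten

lemma powWord_succ {m : ℕ} (u : Fin (m + 1) → List α) (d : Fin (m + 1) → ℕ) :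
    powWord u d = (List.replicate (d 0) (u 0)).flatten ++
      powWord (fun t => u t.succ) (fun t => d t.succ) := by
  simp [powWord, List.ofFn_succ]

lemma filterMap_powWord {β : Type} (f : α → Option β) {m : ℕ} (u : Fin m → List α)
    (d : Fin m → ℕ) : (powWord u d).filterMap f = powWord (fun t => (u t).filterMap f) d := by
  simp [powWord, List.filterMap_flatten, List.map_ofFn, Function.comp_def, List.map_replicate]

lemma Language.mem_kstar_singleton {u x : List α} :
    x ∈ ({u} : Language α)∗ ↔ ∃ c, x = (List.replicate c u).flatten := by
  simp only [Language.mem_kstar]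
  constructor
  · rintro ⟨L, rfl, hL⟩
    exact ⟨L.length, by conv_lhs => rw [List.eq_replicate_iff.2 ⟨rfl, hL⟩]⟩
  · rintro ⟨c, rfl⟩
    exact ⟨_, rfl, fun y hy => List.eq_of_mem_replicate hy⟩

def powLang {m : ℕ} (u : Fin m → List α) : Language α := {w | ∃ d, w = powWord u d}

lemma powLang_eq_prod {m : ℕ} (u : Fin m → List α) :
    powLang u = (List.ofFn fun t => ({u t} : Language α)∗).prod := by
  induction m with
  | zero =>
    ext x
    rw [List.ofFn_zero, List.prod_nil, Language.mem_one]
    simp [powLang, powWord]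
    rfl
  | succ m ih =>
    rw [List.ofFn_succ, List.prod_cons, ← ih]
    ext x
    rw [Language.mem_mul]
    simp only [Language.mem_kstar_singleton, powLang, powWord_succ]
    constructor
    · rintro ⟨d, rfl⟩
      exact ⟨_, ⟨d 0, rfl⟩, _, ⟨fun t => d t.succ, rfl⟩, rfl⟩
    · rintro ⟨_, ⟨c, rfl⟩, _, ⟨d, rfl⟩, rfl⟩
      exact ⟨Fin.cons c d, by simp⟩

lemma boundedLang_eq_prod (ws : List (List α)) :
    boundedLang ws = (ws.map fun u => ({u} : Language α)∗).prod := by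
  change powLang ws.get = _
  rw [powLang_eq_prod]
  conv_rhs => rw [← List.ofFn_get ws, List.map_ofFn]
  rfl

lemma letterLang_eq_prod (as : List α) :
    letterLang as = (as.map fun a => ({[a]} : Language α)∗).prod := by
  have h : letterLang as = powLang fun j => [as.get j] := by
    ext x; exact exists_congr fun _ => by simp [lettersPow, powWord]
  rw [h, powLang_eq_prod]
  conv_rhs => rw [← List.ofFn_get as, List.map_ofFn]
  rfl

lemma boundedLang_append (xs ys : List (List α)) :
    boundedLang (xs ++ ys) = boundedLang xs * boundedLang ys := by
  simp [boundedLang_eq_prod]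

lemma nil_mem_boundedLang (ws : List (List α)) : [] ∈ boundedLang ws :=
  ⟨0, by simp [wordsPow]⟩

lemma forall_mem_of_mem_boundedLang {p : α → Prop} {ws : List (List α)}
    (h : ∀ u ∈ ws, ∀ a ∈ u, p a) :
    ∀ w ∈ boundedLang ws, ∀ a ∈ w, p a := by
  rintro _ ⟨ns, rfl⟩ a ha
  simp only [wordsPow, List.get_eq_getElem, List.mem_flatten, List.mem_ofFn, exists_exists_eq_and,
    List.mem_replicate, ne_eq, ↓existsAndEq, and_true] at ha
  obtain ⟨j, -, ha⟩ := ha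
  exact h _ (List.getElem_mem _) a ha

lemma forall_mem_of_mem_letterLang {p : α → Prop} {as : List α} (h : ∀ a ∈ as, p a) :
    ∀ w ∈ letterLang as, ∀ a ∈ w, p a := by
  rintro _ ⟨ns, rfl⟩ a ha
  simp only [lettersPow, List.get_eq_getElem, List.mem_flatten, List.mem_ofFn,
    exists_exists_eq_and, List.mem_replicate, ne_eq] at ha
  obtain ⟨j, -, rfl⟩ := ha
  exact h _ (List.getElem_mem _)

lemma boundedLang_cons (u : List α) (us : List (List α)) :
    boundedLang (u :: us) = ({u} : Language α)∗ * boundedLang us := by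
  simp [boundedLang_eq_prod]

lemma boundedLang_ofFn {m : ℕ} (u : Fin m → List α) : boundedLang (List.ofFn u) = powLang u := by
  rw [boundedLang_eq_prod, List.map_ofFn, powLang_eq_prod]
  rfl

lemma powWord_singleton_mem_letterLang {m : ℕ} (x : Fin m → α) (v : Fin m → ℕ) :
    powWord (fun t => [x t]) v ∈ letterLang (List.ofFn x) := by
  rw [letterLang_eq_prod, List.map_ofFn]
  exact (powLang_eq_prod _).le ⟨v, rfl⟩

lemma mem_boundedLang_flatMap {ι : Type} {l : List ι} {f : ι → List (List α)} {i : ι}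
    (hi : i ∈ l) {w : List α} (hw : w ∈ boundedLang (f i)) :
    w ∈ boundedLang (l.flatMap f) := by
  obtain ⟨l₁, l₂, rfl⟩ := List.append_of_mem hi
  rw [List.flatMap_append, List.flatMap_cons, boundedLang_append, boundedLang_append]
  exact ⟨[], nil_mem_boundedLang _, w ++ [], ⟨w, hw, [], nil_mem_boundedLang _, rfl⟩, by simp⟩

end PowWord

section ChainAutomaton

variable {α : Type}

def itemLang : List α × Bool → Language α
  | (u, false) => {u}
  | (u, true) => {u}∗

def chainLang (p : List (List α × Bool)) : Language α := (p.map itemLang).prod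

lemma chainLang_cons (it : List α × Bool) (p : List (List α × Bool)) :
    chainLang (it :: p) = itemLang it * chainLang p := by
  simp [chainLang]

lemma chainLang_append (p q : List (List α × Bool)) :
    chainLang (p ++ q) = chainLang p * chainLang q := by
  simp [chainLang]

lemma chainLang_ofFn_star {m : ℕ} (u : Fin m → List α) :
    chainLang (List.ofFn fun t => (u t, true)) = powLang u := by
  rw [powLang_eq_prod, chainLang, List.map_ofFn]
  rfl

/- In state `(r, p)` the rest `r` of the current word is still to be read, then the items `p`; a
starred item stays at the head of `p` while it is being repeated. -/
abbrev ChainState (α : Type) : Type := List α × List (List α × Bool)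

inductive ChainStep : ChainState α → Option α → ChainState α → Prop
  | read (a : α) (r : List α) (p : List (List α × Bool)) : ChainStep (a :: r, p) (some a) (r, p)
  | once (u : List α) (p : List (List α × Bool)) : ChainStep ([], (u, false) :: p) none (u, p)
  | loop (u : List α) (p : List (List α × Bool)) :
      ChainStep ([], (u, true) :: p) none (u, (u, true) :: p)
  | skip (u : List α) (p : List (List α × Bool)) : ChainStep ([], (u, true) :: p) none ([], p)

def chainResidual (x : ChainState α) : Language α := {x.1} * chainLang x.2

lemma ChainStep.residual {x y : ChainState α} {l : Option α} (h : ChainStep x l y) {w : List α}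
    (hw : w ∈ chainResidual y) : l.toList ++ w ∈ chainResidual x := by
  obtain ⟨_, rfl, v, hv, rfl⟩ := Language.mem_mul.1 hw
  cases h with
  | read a r p => exact ⟨a :: r, rfl, v, hv, rfl⟩
  | once u p => exact ⟨[], rfl, u ++ v, by rw [chainLang_cons]; exact ⟨u, rfl, v, hv, rfl⟩, rfl⟩
  | loop u p =>
    rw [chainLang_cons] at hv
    obtain ⟨s, hs, v', hv', rfl⟩ := Language.mem_mul.1 hv
    refine ⟨[], rfl, (u ++ s) ++ v', ?_, by simp⟩
    rw [chainLang_cons]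
    exact ⟨u ++ s, mul_kstar_le_kstar (a := ({u} : Language α)) ⟨u, rfl, s, hs, rfl⟩, v', hv', rfl⟩
  | skip u p =>
    refine ⟨[], rfl, [] ++ v, ?_, rfl⟩
    rw [chainLang_cons]
    exact ⟨[], Language.nil_mem_kstar _, v, hv, rfl⟩

/- A finite set containing every state reachable from some `([], p)` with `p ∈ progs`. -/
def chainStates (progs : List (List (List α × Bool))) : Set (ChainState α) :=
  {x | (∃ p ∈ progs, x.2 <:+ p) ∧ (x.1 = [] ∨ ∃ p ∈ progs, ∃ it ∈ p, x.1 <:+ it.1)}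

lemma chainStates_finite (progs : List (List (List α × Bool))) : (chainStates progs).Finite := by
  refine Set.Finite.subset (((List.finite_toSet (progs.flatten.flatMap fun it => it.1.tails)).insert
    []).prod (List.finite_toSet (progs.flatMap List.tails))) ?_
  rintro ⟨r, p⟩ ⟨⟨q, hq, hpq⟩, hr⟩
  simp only [Set.mem_prod, Set.mem_insert_iff, List.mem_flatMap, List.mem_flatten,
    List.mem_tails]
  refine ⟨?_, q, hq, hpq⟩
  rcases hr with rfl | ⟨p', hp', it, hit, hr⟩
  · exact Or.inl rfl
  · exact Or.inr ⟨it, ⟨p', hp', hit⟩, hr⟩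

instance (progs : List (List (List α × Bool))) : Finite (chainStates progs) :=
  (chainStates_finite progs).to_subtype

lemma ChainStep.mem_chainStates {progs : List (List (List α × Bool))} {x y : ChainState α}
    {l : Option α} (h : ChainStep x l y) (hx : x ∈ chainStates progs) : y ∈ chainStates progs := by
  obtain ⟨⟨q, hq, hpq⟩, hr⟩ := hx
  cases h with
  | read a r p =>
    refine ⟨⟨q, hq, hpq⟩, Or.inr ?_⟩
    obtain ⟨p', hp', it, hit, hr⟩ := hr.resolve_left (List.cons_ne_nil a r)
    exact ⟨p', hp', it, hit, (List.suffix_cons a r).trans hr⟩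
  | once u p =>
    exact ⟨⟨q, hq, (List.suffix_cons _ p).trans hpq⟩,
      Or.inr ⟨q, hq, (u, false), hpq.subset List.mem_cons_self, List.suffix_refl u⟩⟩
  | loop u p =>
    exact ⟨⟨q, hq, hpq⟩,
      Or.inr ⟨q, hq, (u, true), hpq.subset List.mem_cons_self, List.suffix_refl u⟩⟩
  | skip u p => exact ⟨⟨q, hq, (List.suffix_cons _ p).trans hpq⟩, Or.inl rfl⟩

def chainNFA (progs : List (List (List α × Bool))) : εNFA α (chainStates progs) where
  step x l := {y | ChainStep x.1 l y.1}
  start := {x | ∃ p ∈ progs, x.1 = ([], p)}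
  accept := {x | x.1 = ([], [])}

variable {progs : List (List (List α × Bool))}

lemma chainNFA_isPath_residual {x y : chainStates progs} {l : List (Option α)}
    (h : (chainNFA progs).IsPath x y l) (hy : y.1 = ([], [])) :
    l.reduceOption ∈ chainResidual x.1 := by
  induction h with
  | nil x => rw [hy]; exact ⟨[], rfl, [], rfl, rfl⟩
  | cons t s u a l hstep _ ih =>
    rw [List.reduceOption_cons]
    exact ChainStep.residual hstep (ih hy)

lemma chainNFA_isPath_read (p : List (List α × Bool)) :
    ∀ (r : List α) (x : chainStates progs), x.1 = (r, p) →
      ∃ y : chainStates progs, y.1 = ([], p) ∧ (chainNFA progs).IsPath x y (r.map some) := by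
  intro r
  induction r with
  | nil => exact fun x hx => ⟨x, hx, .nil x⟩
  | cons a r ih =>
    intro x hx
    have hstep : ChainStep x.1 (some a) (r, p) := hx ▸ .read a r p
    obtain ⟨y, hy, hpath⟩ := ih ⟨_, hstep.mem_chainStates x.2⟩ rfl
    exact ⟨y, hy, .cons _ x y _ _ hstep hpath⟩

lemma chainNFA_exists_isPath (p : List (List α × Bool)) :
    ∀ x : chainStates progs, x.1 = ([], p) → ∀ w ∈ chainLang p,
      ∃ y l, y ∈ (chainNFA progs).accept ∧ l.reduceOption = w ∧ (chainNFA progs).IsPath x y l := by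
  induction p with
  | nil =>
    rintro x hx w rfl
    exact ⟨x, [], hx, rfl, .nil x⟩
  | cons it p ih =>
    obtain ⟨u, _ | _⟩ := it
    · rintro x hx _ ⟨u', hu, w, hw, rfl⟩
      obtain rfl : u = u' := hu.symm
      have hstep : ChainStep x.1 none (u, p) := hx ▸ .once u p
      obtain ⟨y, hy, hread⟩ := chainNFA_isPath_read p u ⟨_, hstep.mem_chainStates x.2⟩ rfl
      obtain ⟨z, l, hz, rfl, hrest⟩ := ih y hy w hw
      refine ⟨z, none :: (u.map some ++ l), hz,
        by simp [List.reduceOption_append, List.reduceOption_map_some], ?_⟩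
      exact .cons _ x z _ _ hstep ((εNFA.isPath_append _).2 ⟨y, hread, hrest⟩)
    · rintro x hx _ ⟨_, hs, w, hw, rfl⟩
      obtain ⟨L, rfl, hL⟩ := Language.mem_kstar.1 hs
      clear hs
      induction L generalizing x with
      | nil =>
        have hstep : ChainStep x.1 none ([], p) := hx ▸ .skip u p
        obtain ⟨z, l, hz, rfl, hrest⟩ := ih ⟨_, hstep.mem_chainStates x.2⟩ rfl w hw
        exact ⟨z, none :: l, hz, by simp, .cons _ x z _ _ hstep hrest⟩
      | cons v L ihL =>
        obtain rfl : v = u := hL v List.mem_cons_self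
        have hstep : ChainStep x.1 none (v, (v, true) :: p) := hx ▸ .loop v p
        obtain ⟨y, hy, hread⟩ :=
          chainNFA_isPath_read _ v ⟨_, hstep.mem_chainStates x.2⟩ rfl
        obtain ⟨z, l, hz, hl, hrest⟩ := ihL y hy (fun y hy => hL y (List.mem_cons_of_mem _ hy))
        refine ⟨z, none :: (v.map some ++ l), hz,
          by simp [List.reduceOption_append, List.reduceOption_map_some, hl], ?_⟩
        exact .cons _ x z _ _ hstep ((εNFA.isPath_append _).2 ⟨y, hread, hrest⟩)

theorem chainNFA_accepts (progs : List (List (List α × Bool))) :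
    (chainNFA progs).accepts = {w | ∃ p ∈ progs, w ∈ chainLang p} := by
  ext w
  rw [εNFA.mem_accepts_iff_exists_path]
  constructor
  · rintro ⟨x, y, l, ⟨p, hp, hx⟩, hy, rfl, hpath⟩
    have h := chainNFA_isPath_residual hpath hy
    rw [chainResidual, hx] at h
    change _ ∈ (1 : Language α) * chainLang p at h
    rw [one_mul] at h
    exact ⟨p, hp, h⟩
  · rintro ⟨p, hp, hw⟩
    have hx : (([], p) : ChainState α) ∈ chainStates progs :=
      ⟨⟨p, hp, List.suffix_refl p⟩, Or.inl rfl⟩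
    obtain ⟨y, l, hy, hl, hpath⟩ := chainNFA_exists_isPath p ⟨_, hx⟩ rfl w hw
    exact ⟨⟨_, hx⟩, y, l, ⟨p, hp, rfl⟩, hy, hl, hpath⟩

end ChainAutomaton

section Effect

variable {k : ℕ}

def Instr.delta : Instr k → Fin k → ℤ
  | .C i => Pi.single i 1
  | .D i => Pi.single i (-1)

lemma Instr.delta_apply_mem (x : Instr k) (i : Fin k) :
    x.delta i = -1 ∨ x.delta i = 0 ∨ x.delta i = 1 := by
  cases x with
  | C j | D j => by_cases h : i = j <;> simp [Instr.delta, h]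

lemma Instr.eq_of_delta_ne_zero (x : Instr k) {i j : Fin k} (hi : x.delta i ≠ 0)
    (hj : x.delta j ≠ 0) : i = j := by
  cases x <;> simp only [Instr.delta, ne_eq, Pi.single_apply, ite_eq_right_iff, not_forall] at hi hj
    <;> exact hi.1.trans hj.1.symm

def effect (u : List (Instr k)) : Fin k → ℤ := (u.map Instr.delta).sum

@[simp] lemma effect_nil : effect ([] : List (Instr k)) = 0 := rfl

@[simp] lemma effect_cons (x : Instr k) (u : List (Instr k)) :
    effect (x :: u) = x.delta + effect u := by
  simp [effect]

@[simp] lemma effect_append (u v : List (Instr k)) : effect (u ++ v) = effect u + effect v := by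
  simp [effect]

lemma effect_nonneg_of_incWords {u : List (Instr k)} (hu : u ∈ incWords) : 0 ≤ effect u := by
  refine List.sum_nonneg fun d hd => ?_
  obtain ⟨x, hx, rfl⟩ := List.mem_map.1 hd
  cases x with
  | C j => exact Pi.single_nonneg.2 zero_le_one
  | D j => exact (hu _ hx).elim

lemma effect_nonpos_of_decWords {u : List (Instr k)} (hu : u ∈ decWords) : effect u ≤ 0 := by
  induction u with
  | nil => rfl
  | cons x u ih =>
    have hx : x.delta ≤ 0 := by
      cases x with
      | C j => exact (hu _ List.mem_cons_self).elim
      | D j => exact Pi.single_nonpos.2 (by norm_num)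
    rw [effect_cons]
    exact add_nonpos hx (ih fun a ha => hu a (List.mem_cons_of_mem _ ha))

lemma effect_nonneg_of_prefix {w u : List (Instr k)} (hw : w ∈ incWords * decWords)
    (h0 : effect w = 0) (hu : u <+: w) : 0 ≤ effect u := by
  obtain ⟨β, hβ, γ, hγ, rfl⟩ := Language.mem_mul.1 hw
  obtain ⟨v, huv⟩ := hu
  rcases List.append_eq_append_iff.1 huv with ⟨β', rfl, rfl⟩ | ⟨γ', rfl, rfl⟩
  · exact effect_nonneg_of_incWords fun a ha => hβ a (List.mem_append_left _ ha)
  · have hv : effect v ≤ 0 :=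
      effect_nonpos_of_decWords fun a ha => hγ a (List.mem_append_right _ ha)
    rw [effect_append, effect_append, ← add_assoc] at h0
    rw [effect_append, eq_neg_of_add_eq_zero_left h0]
    exact neg_nonneg.2 hv

lemma incBeforeDec_of_mem_incWords_mul_decWords {w : List (Instr k)}
    (hw : w ∈ incWords * decWords) :
    IncBeforeDec w := by
  obtain ⟨β, hβ, γ, hγ, rfl⟩ := Language.mem_mul.1 hw
  intro i x y z h
  rcases List.append_eq_append_iff.1 h with ⟨β', rfl, rfl⟩ | ⟨γ', rfl, hγ'⟩
  · exact hγ (Instr.C i) (by simp)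
  · rcases γ' with _ | ⟨a, γ'⟩
    · rw [List.nil_append] at hγ'
      exact hγ (Instr.C i) (by simp [← hγ'])
    · obtain rfl : a = Instr.D i := (List.cons_eq_cons.1 hγ').1.symm
      exact hβ (Instr.D i) (by simp)

lemma boundedLang_mul_letterLang_le {us : List (List (Instr k))} {bs : List (Instr k)}
    (hus : ∀ u ∈ us, ∀ a ∈ u, a.isInc) (hbs : ∀ b ∈ bs, b.isDec) :
    boundedLang us * letterLang bs ≤ incWords * decWords := by
  rintro _ ⟨u, hu, v, hv, rfl⟩
  exact ⟨u, forall_mem_of_mem_boundedLang hus u hu, v, forall_mem_of_mem_letterLang hbs v hv, rfl⟩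

lemma letterLang_mul_boundedLang_le {as : List (Instr k)} {us : List (List (Instr k))}
    (has : ∀ a ∈ as, a.isInc) (hus : ∀ u ∈ us, ∀ b ∈ u, b.isDec) :
    letterLang as * boundedLang us ≤ incWords * decWords := by
  rintro _ ⟨u, hu, v, hv, rfl⟩
  exact ⟨u, forall_mem_of_mem_letterLang has u hu, v, forall_mem_of_mem_boundedLang hus v hv, rfl⟩

lemma boundedLang_mul_letterLang_mem_famBDiLBd {us : List (List (Instr k))}
    {bs : List (Instr k)} (hus : ∀ u ∈ us, ∀ a ∈ u, a.isInc) (hbs : ∀ b ∈ bs, b.isDec) :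
    boundedLang us * letterLang bs ∈ famBDiLBd k :=
  ⟨⟨us, bs, hus, hbs, rfl⟩, fun _ hw =>
    incBeforeDec_of_mem_incWords_mul_decWords (boundedLang_mul_letterLang_le hus hbs hw)⟩

lemma letterLang_mul_boundedLang_mem_famLBiBDd {as : List (Instr k)}
    {us : List (List (Instr k))} (has : ∀ a ∈ as, a.isInc) (hus : ∀ u ∈ us, ∀ b ∈ u, b.isDec) :
    letterLang as * boundedLang us ∈ famLBiBDd k :=
  ⟨⟨as, us, has, hus, rfl⟩, fun _ hw =>
    incBeforeDec_of_mem_incWords_mul_decWords (letterLang_mul_boundedLang_le has hus hw)⟩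

end Effect

section Simulation

variable {k : ℕ} {A : Type}

def readPart (α : List (A ⊕ Instr k)) : List A := α.filterMap Sum.getLeft?

def instrPart (α : List (A ⊕ Instr k)) : List (Instr k) := α.filterMap Sum.getRight?

@[simp] lemma readPart_nil : readPart ([] : List (A ⊕ Instr k)) = [] := rfl

@[simp] lemma instrPart_nil : instrPart ([] : List (A ⊕ Instr k)) = [] := rfl

@[simp] lemma readPart_append (α β : List (A ⊕ Instr k)) :
    readPart (α ++ β) = readPart α ++ readPart β := List.filterMap_append

@[simp] lemma instrPart_append (α β : List (A ⊕ Instr k)) :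
    instrPart (α ++ β) = instrPart α ++ instrPart β := List.filterMap_append

lemma CTrans.instr_of_delta_eq_zero {n : ℕ} (t : CTrans k n A) (h : t.delta = 0) :
    t.instr = [] := by
  simp [CTrans.instr, h]

lemma CTrans.instr_of_delta_eq {n : ℕ} (t : CTrans k n A) (x : Instr k) (h : t.delta = x.delta) :
    t.instr = [x] := by
  cases x with
  | C j | D j =>
    rw [CTrans.instr, List.flatten_map_eq_of_ne (List.nodup_finRange k) (List.mem_finRange j)]
    · simp [h, Instr.delta]
    · intro i _ hij
      simp [h, Instr.delta, hij]

lemma CTrans.instr_of_delta_eq_effect {n : ℕ} (t : CTrans k n A) (l : Option (A ⊕ Instr k))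
    (h : t.delta = effect (instrPart l.toList)) : t.instr = instrPart l.toList := by
  rcases l with _ | _ | x
  · exact t.instr_of_delta_eq_zero h
  · exact t.instr_of_delta_eq_zero h
  · exact t.instr_of_delta_eq x (by simpa [instrPart] using h)

lemma effect_instrPart_toList_apply_mem (l : Option (A ⊕ Instr k)) (i : Fin k) :
    effect (instrPart l.toList) i = -1 ∨ effect (instrPart l.toList) i = 0 ∨
      effect (instrPart l.toList) i = 1 := by
  rcases l with _ | _ | x
  · simp
  · simp [instrPart, List.filterMap_cons]
  · simpa [instrPart, List.filterMap_cons] using x.delta_apply_mem i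

lemma eq_of_effect_instrPart_toList_ne_zero (l : Option (A ⊕ Instr k)) {i j : Fin k}
    (hi : effect (instrPart l.toList) i ≠ 0) (hj : effect (instrPart l.toList) j ≠ 0) : i = j := by
  rcases l with _ | _ | x
  · simp at hi
  · simp [instrPart, List.filterMap_cons] at hi
  · simp only [instrPart, Option.toList_some, List.filterMap_cons, Sum.getRight?_inr,
      List.filterMap_nil, effect_cons, effect_nil, add_zero] at hi hj
    exact x.eq_of_delta_ne_zero hi hj

lemma NCMachine.Derives.cons {M : NCMachine k A} {t : CTrans k M.n A}
    {ts : List (CTrans k M.n A)} {c c₁ c' : M.Config} (h : M.Step t c c₁)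
    (h' : M.Derives ts c₁ c') : M.Derives (t :: ts) c c' :=
  ⟨c₁, h, h'⟩

lemma NCMachine.Derives.append {M : NCMachine k A} {ts ts' : List (CTrans k M.n A)}
    {c c' c'' : M.Config} (h : M.Derives ts c c') (h' : M.Derives ts' c' c'') :
    M.Derives (ts ++ ts') c c'' := by
  induction ts generalizing c with
  | nil => exact (show c' = c from h) ▸ h'
  | cons t ts ih =>
    obtain ⟨c₁, hstep, hrest⟩ := h
    exact ⟨c₁, hstep, ih hrest⟩

inductive Control (σ : Type) : Type
  | init
  | run (s : σ)
  | halt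

instance {σ : Type} [Finite σ] : Finite (Control σ) :=
  Finite.of_injective (fun c : Control σ => match c with
      | .init => (none : Option (Option σ))
      | .run s => some (some s)
      | .halt => some none)
    (by rintro (_ | _ | _) (_ | _ | _) h <;> simp_all)

namespace εNFA

variable {σ : Type} (N : εNFA (A ⊕ Instr k) σ)

/- `halt` can only be entered by a transition testing all counters for zero. -/
inductive Move : Control σ → Option A → (Fin k → ℤ) → (Fin k → Bool) → Control σ → Prop
  | start {s : σ} (hs : s ∈ N.start) (test : Fin k → Bool) : Move .init none 0 test (.run s)
  | step {s s' : σ} {l : Option (A ⊕ Instr k)} (h : s' ∈ N.step s l) (test : Fin k → Bool) :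
      Move (.run s) (l.bind Sum.getLeft?) (effect (instrPart l.toList)) test (.run s')
  | halt {s : σ} (hs : s ∈ N.accept) : Move (.run s) none 0 (fun _ => false) .halt

lemma Move.exists_delta_eq {p q : Control σ} {inp : Option A} {δ : Fin k → ℤ}
    {test : Fin k → Bool} (hm : N.Move p inp δ test q) :
    ∃ l : Option (A ⊕ Instr k), δ = effect (instrPart l.toList) := by
  cases hm with
  | start => exact ⟨none, rfl⟩
  | @step _ _ l => exact ⟨l, rfl⟩
  | halt => exact ⟨none, rfl⟩

def counterLang : Language A := readPart '' {α | α ∈ N.accepts ∧ effect (instrPart α) = 0}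

variable [Finite σ]

noncomputable def toNCMachine : NCMachine k A where
  n := Nat.card (Control σ)
  start := Finite.equivFin _ .init
  final := {Finite.equivFin _ .halt}
  trans := {t | N.Move ((Finite.equivFin _).symm t.src) t.input t.delta t.test
    ((Finite.equivFin _).symm t.dst)}

noncomputable def enc (p : Control σ) : Fin N.toNCMachine.n := Finite.equivFin _ p

noncomputable def ctrl (q : Fin N.toNCMachine.n) : Control σ := (Finite.equivFin _).symm q

@[simp] lemma ctrl_enc (p : Control σ) : N.ctrl (N.enc p) = p :=
  (Finite.equivFin _).symm_apply_apply p

lemma mem_toNCMachine_trans {t : CTrans k N.toNCMachine.n A} :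
    t ∈ N.toNCMachine.trans ↔ N.Move (N.ctrl t.src) t.input t.delta t.test (N.ctrl t.dst) :=
  Iff.rfl

lemma toNCMachine_step_cases {t : CTrans k N.toNCMachine.n A} {c c' : N.toNCMachine.Config}
    (h : N.toNCMachine.Step t c c') :
    (N.ctrl c.1 = .init ∧ (∃ s ∈ N.start, N.ctrl c'.1 = .run s) ∧ c'.2 = c.2 ∧ t.instr = []) ∨
    (∃ s l s', s' ∈ N.step s l ∧ N.ctrl c.1 = .run s ∧ N.ctrl c'.1 = .run s' ∧
      c.2.1 = readPart l.toList ++ c'.2.1 ∧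
      (∀ i, (c'.2.2 i : ℤ) = c.2.2 i + effect (instrPart l.toList) i) ∧
      t.instr = instrPart l.toList) ∨
    (∃ s ∈ N.accept, N.ctrl c.1 = .run s ∧ N.ctrl c'.1 = .halt ∧ c.2.2 = 0 ∧ c'.2 = c.2 ∧
      t.instr = []) := by
  obtain ⟨hm, hsrc, hdst, htest, -, hcnt, hin⟩ := h
  rw [mem_toNCMachine_trans, ← hsrc, ← hdst] at hm
  have hin' : c.2.1 = t.input.toList ++ c'.2.1 := by
    revert hin; cases t.input <;> simp [eq_comm]
  generalize N.ctrl c.1 = p at hm ⊢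
  generalize N.ctrl c'.1 = q at hm ⊢
  generalize hinp : t.input = inp at hm hin'
  generalize hδ : t.delta = δ at hm hcnt
  generalize htst : t.test = tst at hm htest
  cases hm with
  | start hs test =>
    exact Or.inl ⟨rfl, ⟨_, hs, rfl⟩, Prod.ext (by simpa using hin'.symm)
      (funext fun i => by simpa using hcnt i), t.instr_of_delta_eq_zero hδ⟩
  | @step s s' l hl test =>
    refine Or.inr (Or.inl ⟨s, l, s', hl, rfl, rfl, ?_, hcnt, t.instr_of_delta_eq_effect l hδ⟩)
    rcases l with _ | _ | _ <;> simpa [readPart, List.filterMap_cons] using hin'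
  | halt hs =>
    refine Or.inr (Or.inr ⟨_, hs, rfl, rfl, funext fun i => ?_, Prod.ext (by simpa using hin'.symm)
      (funext fun i => by simpa using hcnt i), t.instr_of_delta_eq_zero hδ⟩)
    simpa using htest i

lemma toNCMachine_derives_of_ctrl_halt {ts : List (CTrans k N.toNCMachine.n A)}
    {c c' : N.toNCMachine.Config} (hc : N.ctrl c.1 = .halt) (h : N.toNCMachine.Derives ts c c') :
    ts = [] ∧ c' = c := by
  cases ts with
  | nil => exact ⟨rfl, h⟩
  | cons t ts =>
    obtain ⟨c₁, hstep, -⟩ := h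
    rcases N.toNCMachine_step_cases hstep with ⟨h', -⟩ | ⟨_, _, _, _, h', -⟩ | ⟨_, _, h', -⟩ <;>
      simp [hc] at h'

lemma toNCMachine_derives_sound {ts : List (CTrans k N.toNCMachine.n A)} :
    ∀ {c c' : N.toNCMachine.Config} {s : σ}, N.ctrl c.1 = .run s →
      N.toNCMachine.Derives ts c c' → N.ctrl c'.1 = .halt →
      ∃ s' x, s' ∈ N.accept ∧ N.IsPath s s' x ∧
        c.2.1 = readPart x.reduceOption ++ c'.2.1 ∧ hDelta ts = instrPart x.reduceOption ∧
        c'.2.2 = 0 ∧ ∀ i, (c.2.2 i : ℤ) + effect (instrPart x.reduceOption) i = 0 := by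
  induction ts with
  | nil =>
    intro c c' s hc h hc'
    rw [show c' = c from h, hc] at hc'
    exact absurd hc' (by simp)
  | cons t ts ih =>
    intro c c' s hc h hc'
    obtain ⟨c₁, hstep, hrest⟩ := h
    rcases N.toNCMachine_step_cases hstep with
      ⟨h', -⟩ | ⟨s₀, l, s₁, hl, hs₀, hs₁, hin, hcnt, hinstr⟩ |
        ⟨s₀, hacc, hs₀, hhalt, hzero, heq, hinstr⟩
    · simp [hc] at h'
    · obtain rfl : s₀ = s := by simpa [hc] using hs₀.symm
      obtain ⟨s', x, hacc, hpath, hin', hdelta, hzero, hsum⟩ := ih hs₁ hrest hc'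
      refine ⟨s', l :: x, hacc, .cons s₁ s₀ s' l x hl hpath, ?_, ?_, hzero, fun i => ?_⟩
      · rw [List.reduceOption_cons, readPart_append, hin, hin', List.append_assoc]
      · simp only [hDelta, List.map_cons, List.flatten_cons] at hdelta ⊢
        rw [hinstr, hdelta, List.reduceOption_cons, instrPart_append]
      · rw [List.reduceOption_cons, instrPart_append, effect_append, Pi.add_apply, ← hsum i, hcnt i]
        ring
    · obtain rfl : s₀ = s := by simpa [hc] using hs₀.symm
      obtain ⟨rfl, rfl⟩ := N.toNCMachine_derives_of_ctrl_halt hhalt hrest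
      exact ⟨s₀, [], hacc, .nil s₀, by simp [heq], by simp [hDelta, hinstr], by rw [heq, hzero],
        fun i => by simp [hzero]⟩

lemma toNCMachine_accepting_sound {w : List A} {ts : List (CTrans k N.toNCMachine.n A)}
    {q : Fin N.toNCMachine.n} {cnt : Fin k → ℕ} (hq : q ∈ N.toNCMachine.final)
    (h : N.toNCMachine.Derives ts (N.toNCMachine.initConfig w) (q, [], cnt)) :
    cnt = 0 ∧ ∃ α ∈ N.accepts, w = readPart α ∧ hDelta ts = instrPart α ∧
      effect (instrPart α) = 0 := by
  have hq' : N.ctrl q = .halt := by rw [Set.mem_singleton_iff.1 hq]; exact N.ctrl_enc _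
  have hinit : N.ctrl (N.toNCMachine.initConfig w).1 = .init := N.ctrl_enc _
  cases ts with
  | nil =>
    rw [show q = (N.toNCMachine.initConfig w).1 from congrArg Prod.fst h, hinit] at hq'
    exact absurd hq' (by simp)
  | cons t ts =>
    obtain ⟨c₁, hstep, hrest⟩ := h
    rcases N.toNCMachine_step_cases hstep with ⟨-, ⟨s, hs, hs₁⟩, heq, hinstr⟩ |
      ⟨_, _, _, _, h', -⟩ | ⟨_, _, h', -⟩
    · obtain ⟨s', x, hacc, hpath, hin, hdelta, hzero, hsum⟩ :=
        N.toNCMachine_derives_sound hs₁ hrest hq'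
      rw [heq] at hin hsum
      refine ⟨hzero, x.reduceOption,
        (εNFA.mem_accepts_iff_exists_path _).2 ⟨s, s', x, hs, hacc, rfl, hpath⟩,
        by simpa [NCMachine.initConfig] using hin, ?_,
        funext fun i => by simpa [NCMachine.initConfig] using hsum i⟩
      simp only [hDelta, List.map_cons, List.flatten_cons] at hdelta ⊢
      rw [hinstr, hdelta, List.nil_append]
    · simp [hinit] at h'
    · simp [hinit] at h'

lemma toNCMachine_step_of_move {p q : Control σ} {inp : Option A} {δ : Fin k → ℤ}
    {test : Fin k → Bool} (hm : N.Move p inp δ test q) {w w' : List A} {c c' : Fin k → ℕ}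
    (htest : ∀ i, test i = true ↔ 0 < c i) (hδ : ∀ i, δ i = -1 ∨ δ i = 0 ∨ δ i = 1)
    (hc : ∀ i, (c' i : ℤ) = c i + δ i) (hw : w = inp.toList ++ w') :
    N.toNCMachine.Step ⟨N.enc p, inp, test, N.enc q, δ⟩ (N.enc p, w, c) (N.enc q, w', c') := by
  refine ⟨by simpa [mem_toNCMachine_trans] using hm, rfl, rfl, htest, hδ, hc, ?_⟩
  cases inp <;> simpa [eq_comm] using hw

lemma toNCMachine_derives_of_isPath {s s' : σ} {x : List (Option (A ⊕ Instr k))}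
    (hx : N.IsPath s s' x) :
    ∀ (r : List A) (c : Fin k → ℕ),
      (∀ u, u <+: instrPart x.reduceOption → ∀ i, 0 ≤ (c i : ℤ) + effect u i) →
      ∃ ts c', N.toNCMachine.Derives ts (N.enc (.run s), readPart x.reduceOption ++ r, c)
          (N.enc (.run s'), r, c') ∧
        ∀ i, (c' i : ℤ) = c i + effect (instrPart x.reduceOption) i := by
  induction hx with
  | nil s => exact fun r c _ => ⟨[], c, rfl, by simp⟩
  | cons t s u l x hl _ ih =>
    intro r c hfeas
    simp only [List.reduceOption_cons, instrPart_append, readPart_append, effect_append,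
      List.append_assoc] at hfeas ⊢
    set c₁ : Fin k → ℕ := fun i => ((c i : ℤ) + effect (instrPart l.toList) i).toNat
    have hc₁ : ∀ i, (c₁ i : ℤ) = c i + effect (instrPart l.toList) i := fun i =>
      Int.toNat_of_nonneg (by simpa using hfeas _ (List.prefix_append _ _) i)
    obtain ⟨ts, c', hts, hc'⟩ := ih r c₁ fun u hu i => by
      have := hfeas _ ((List.prefix_append_right_inj _).2 hu) i
      rwa [effect_append, Pi.add_apply, ← add_assoc, ← hc₁] at this
    refine ⟨_, c', .cons (N.toNCMachine_step_of_move (.step hl fun i => decide (0 < c i))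
      (by simp) (effect_instrPart_toList_apply_mem l) hc₁ ?_) hts,
      fun i => by rw [hc' i, hc₁ i, Pi.add_apply]; ring⟩
    rcases l with _ | _ | _ <;> simp [readPart, List.filterMap_cons]

lemma toNCMachine_mem_lang {α : List (A ⊕ Instr k)} (hα : α ∈ N.accepts)
    (hfeas : ∀ u, u <+: instrPart α → 0 ≤ effect u) (h0 : effect (instrPart α) = 0) :
    readPart α ∈ N.toNCMachine.lang := by
  obtain ⟨s, s', x, hs, hs', rfl, hpath⟩ := (εNFA.mem_accepts_iff_exists_path _).1 hα
  obtain ⟨ts, c', hts, hc'⟩ :=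
    N.toNCMachine_derives_of_isPath hpath [] 0 fun u hu i => by simpa using hfeas u hu i
  obtain rfl : c' = 0 := funext fun i => by simpa [h0] using hc' i
  have hstart := N.toNCMachine_step_of_move (w := readPart x.reduceOption)
    (w' := readPart x.reduceOption ++ []) (c := 0) (c' := 0) (.start hs fun _ => false)
    (by simp) (by simp) (by simp) (by simp)
  have hhalt := N.toNCMachine_step_of_move (w := []) (w' := []) (c := 0) (c' := 0) (.halt hs')
    (by simp) (by simp) (by simp) rfl
  exact ⟨_, N.enc .halt, 0, rfl, .cons hstart (hts.append (.cons (ts := []) hhalt rfl))⟩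

theorem counterLang_mem_NCMLangK {𝓘k : Set (Language (Instr k))} {I : Language (Instr k)}
    (hI : I ∈ 𝓘k) (hIshape : I ≤ incWords * decWords) (hN : ∀ α ∈ N.accepts, instrPart α ∈ I) :
    N.counterLang ∈ NCMLangK k 𝓘k A := by
  refine ⟨N.toNCMachine, ⟨fun t ht i j hi hj => ?_, fun w ts q cnt hq h => ?_⟩, ⟨I, hI, ?_⟩, ?_⟩
  · obtain ⟨l, hl⟩ := Move.exists_delta_eq N ht
    rw [hl] at hi hj
    exact eq_of_effect_instrPart_toList_ne_zero l hi hj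
  · obtain ⟨hcnt, α, hα, -, hts, -⟩ := N.toNCMachine_accepting_sound hq h
    exact ⟨hcnt, hts ▸ incBeforeDec_of_mem_incWords_mul_decWords (hIshape (hN α hα))⟩
  · rintro w ts ⟨q, hq, h⟩
    obtain ⟨-, α, hα, -, hts, -⟩ := N.toNCMachine_accepting_sound hq h
    exact hts ▸ hN α hα
  · ext w
    constructor
    · rintro ⟨ts, q, cnt, hq, h⟩
      obtain ⟨-, α, hα, rfl, -, h0⟩ := N.toNCMachine_accepting_sound hq h
      exact ⟨α, ⟨hα, h0⟩, rfl⟩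
    · rintro ⟨α, ⟨hα, h0⟩, rfl⟩
      exact N.toNCMachine_mem_lang hα
        (fun u hu => effect_nonneg_of_prefix (hIshape (hN α hα)) h0 hu) h0

end εNFA

end Simulation

section BoundedSemilinear

variable {k m : ℕ} {A : Type}

lemma effect_flatten (L : List (List (Instr k))) : effect L.flatten = (L.map effect).sum := by
  induction L with
  | nil => rfl
  | cons u L ih => simp [ih]

lemma effect_powWord (u : Fin m → List (Instr k)) (d : Fin m → ℕ) :
    effect (powWord u d) = ∑ t, d t • effect (u t) := by
  simp [powWord, effect_flatten, List.map_ofFn, List.sum_ofFn, Function.comp_def,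
    List.map_replicate, List.sum_replicate]

def opWord (x : Fin m → Instr k) (v : Fin m → ℕ) : List (Instr k) :=
  powWord (fun t => [x t]) v

lemma effect_opWord (x : Fin m → Instr k) (v : Fin m → ℕ) :
    effect (opWord x v) = ∑ t, v t • (x t).delta := by
  simp [opWord, effect_powWord]

lemma mem_of_mem_opWord {x : Fin m → Instr k} {v : Fin m → ℕ} {a : Instr k}
    (ha : a ∈ opWord x v) : ∃ t, a = x t := by
  simp only [opWord, powWord, List.flatten_replicate_singleton, List.mem_flatten, List.mem_ofFn,
    exists_exists_eq_and, List.mem_replicate, ne_eq] at ha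
  obtain ⟨t, -, rfl⟩ := ha
  exact ⟨t, rfl⟩

/- Counter `t.castSucc` holds the exponent of the `t`-th word; the last counter is never used and
only serves to make the number of counters positive. -/
def incAt (t : Fin m) : Instr (m + 1) := .C t.castSucc

def decAt (t : Fin m) : Instr (m + 1) := .D t.castSucc

lemma effect_opWord_incAt_castSucc (v : Fin m → ℕ) (t : Fin m) :
    effect (opWord incAt v) t.castSucc = v t := by
  simp [effect_opWord, incAt, Instr.delta, Finset.sum_apply, Pi.single_apply]

lemma effect_opWord_incAt_injective : Function.Injective (effect ∘ opWord (incAt (m := m))) :=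
  fun v d h => funext fun t => by
    simpa [effect_opWord_incAt_castSucc] using congrFun h t.castSucc

lemma effect_opWord_decAt (v : Fin m → ℕ) :
    effect (opWord decAt v) = -effect (opWord incAt v) := by
  simp [effect_opWord, incAt, decAt, Instr.delta, Pi.single_neg]

lemma effect_opWord_incAt_add_decAt_eq_zero_iff (v d : Fin m → ℕ) :
    effect (opWord incAt v) + effect (opWord decAt d) = 0 ↔ v = d := by
  rw [effect_opWord_decAt, add_neg_eq_zero]
  exact effect_opWord_incAt_injective.eq_iff

def opAct (x : Fin m → Instr k) (v : Fin m → ℕ) : List (A ⊕ Instr k) := (opWord x v).map .inr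

@[simp] lemma readPart_opAct (x : Fin m → Instr k) (v : Fin m → ℕ) :
    readPart (opAct (A := A) x v) = [] := by
  simp [readPart, opAct, List.filterMap_map, Function.comp_def]

@[simp] lemma instrPart_opAct (x : Fin m → Instr k) (v : Fin m → ℕ) :
    instrPart (opAct (A := A) x v) = opWord x v := by
  simp [instrPart, opAct, List.filterMap_map, Function.comp_def]

lemma readPart_powWord (u : Fin m → List (A ⊕ Instr k)) (d : Fin m → ℕ) :
    readPart (powWord u d) = powWord (fun t => readPart (u t)) d :=
  filterMap_powWord _ u d

lemma instrPart_powWord (u : Fin m → List (A ⊕ Instr k)) (d : Fin m → ℕ) :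
    instrPart (powWord u d) = powWord (fun t => instrPart (u t)) d :=
  filterMap_powWord _ u d

def linearComb (v₀ : Fin m → ℕ) (ps : List (Fin m → ℕ)) (n : Fin ps.length → ℕ) : Fin m → ℕ :=
  fun t => v₀ t + ∑ j, n j * ps.get j t

section Period

variable (x : Fin m → Instr k) (v₀ : Fin m → ℕ) (ps : List (Fin m → ℕ))

def periodItems : List (List (A ⊕ Instr k) × Bool) :=
  (opAct x v₀, false) :: List.ofFn fun j => (opAct x (ps.get j), true)

def periodAct (n : Fin ps.length → ℕ) : List (A ⊕ Instr k) :=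
  opAct x v₀ ++ powWord (fun j => opAct x (ps.get j)) n

def periodWords : List (List (Instr k)) :=
  opWord x v₀ :: List.ofFn fun j => opWord x (ps.get j)

variable {x v₀ ps} in
lemma mem_chainLang_periodItems {α : List (A ⊕ Instr k)} :
    α ∈ chainLang (periodItems x v₀ ps) ↔ ∃ n, α = periodAct x v₀ ps n := by
  rw [periodItems, chainLang_cons, chainLang_ofFn_star]
  constructor
  · rintro ⟨_, rfl, _, ⟨n, rfl⟩, rfl⟩
    exact ⟨n, rfl⟩
  · rintro ⟨n, rfl⟩
    exact ⟨_, rfl, _, ⟨n, rfl⟩, rfl⟩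

variable (n : Fin ps.length → ℕ)

@[simp] lemma readPart_periodAct : readPart (periodAct (A := A) x v₀ ps n) = [] := by
  rw [periodAct, readPart_append, readPart_powWord]
  simp [powWord]

lemma instrPart_periodAct : instrPart (periodAct (A := A) x v₀ ps n) =
    opWord x v₀ ++ powWord (fun j => opWord x (ps.get j)) n := by
  simp [periodAct, instrPart_powWord]

lemma effect_instrPart_periodAct :
    effect (instrPart (periodAct (A := A) x v₀ ps n)) = effect (opWord x (linearComb v₀ ps n)) := by
  simp only [instrPart_periodAct, effect_append, effect_powWord, effect_opWord, linearComb,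
    add_smul, Finset.sum_add_distrib, Finset.smul_sum, Finset.sum_smul, mul_smul]
  rw [Finset.sum_comm]

lemma instrPart_periodAct_mem :
    instrPart (periodAct (A := A) x v₀ ps n) ∈ boundedLang (periodWords x v₀ ps) := by
  rw [instrPart_periodAct, periodWords, boundedLang_cons, boundedLang_ofFn]
  exact ⟨_, Language.mem_kstar_singleton.2 ⟨1, by simp⟩, _, ⟨n, rfl⟩, rfl⟩

end Period

lemma forall_mem_flatMap_periodWords {x : Fin m → Instr k} {p : Instr k → Prop}
    (hx : ∀ t, p (x t)) (comps : List ((Fin m → ℕ) × List (Fin m → ℕ))) :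
    ∀ u ∈ comps.flatMap (fun cp => periodWords x cp.1 cp.2), ∀ a ∈ u, p a := by
  intro u hu a ha
  obtain ⟨cp, -, hu⟩ := List.mem_flatMap.1 hu
  have hop : ∀ v, ∀ a ∈ opWord x v, p a := fun v a ha => by
    obtain ⟨t, rfl⟩ := mem_of_mem_opWord ha
    exact hx t
  rcases List.mem_cons.1 hu with rfl | hu
  · exact hop _ a ha
  · obtain ⟨j, rfl⟩ := List.mem_ofFn.1 hu
    exact hop _ a ha

section Block

variable (ws : List (List A)) (y : Fin ws.length → Instr k)

def blockAct (t : Fin ws.length) : List (A ⊕ Instr k) := .inr (y t) :: (ws.get t).map .inl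

def blockItems : List (List (A ⊕ Instr k) × Bool) := List.ofFn fun t => (blockAct ws y t, true)

lemma readPart_powWord_blockAct (d : Fin ws.length → ℕ) :
    readPart (powWord (blockAct ws y) d) = wordsPow ws d := by
  rw [readPart_powWord]
  congr
  funext t
  simp [blockAct, readPart, List.filterMap_cons, List.filterMap_map, Function.comp_def]

lemma instrPart_powWord_blockAct (d : Fin ws.length → ℕ) :
    instrPart (powWord (blockAct ws y) d) = opWord y d := by
  rw [instrPart_powWord]
  congr
  funext t
  simp [blockAct, instrPart, List.filterMap_map, Function.comp_def]

end Block

variable (ws : List (List A)) (comps : List ((Fin ws.length → ℕ) × List (Fin ws.length → ℕ)))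

def boundedSemilinearLang : Language A :=
  {w | ∃ v ∈ {v | ∃ c ∈ comps, v ∈ linearSet c.1 c.2}, w = wordsPow ws v}

def progsBDiLBd : List (List (List (A ⊕ Instr (ws.length + 1)) × Bool)) :=
  comps.map fun cp => periodItems incAt cp.1 cp.2 ++ blockItems ws decAt

def instrsBDiLBd : Language (Instr (ws.length + 1)) :=
  boundedLang (comps.flatMap fun cp => periodWords incAt cp.1 cp.2) * letterLang (List.ofFn decAt)

lemma mem_progsBDiLBd_accepts {α : List (A ⊕ Instr (ws.length + 1))} :
    α ∈ (chainNFA (progsBDiLBd ws comps)).accepts ↔ ∃ cp ∈ comps, ∃ n d,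
      α = periodAct incAt cp.1 cp.2 n ++ powWord (blockAct ws decAt) d := by
  simp only [progsBDiLBd, chainNFA_accepts, List.mem_map, exists_exists_and_eq_and,
    chainLang_append, blockItems, chainLang_ofFn_star]
  constructor
  · rintro ⟨cp, hcp, _, hα, _, ⟨d, rfl⟩, rfl⟩
    obtain ⟨n, rfl⟩ := mem_chainLang_periodItems.1 hα
    exact ⟨cp, hcp, n, d, rfl⟩
  · rintro ⟨cp, hcp, n, d, rfl⟩
    exact ⟨cp, hcp, _, mem_chainLang_periodItems.2 ⟨n, rfl⟩, _, ⟨d, rfl⟩, rfl⟩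

lemma counterLang_progsBDiLBd :
    (chainNFA (progsBDiLBd ws comps)).counterLang = boundedSemilinearLang ws comps := by
  have hzero : ∀ (cp : (Fin ws.length → ℕ) × List (Fin ws.length → ℕ)) n d,
      effect (instrPart (periodAct (A := A) incAt cp.1 cp.2 n ++ powWord (blockAct ws decAt) d))
        = 0 ↔ d = linearComb cp.1 cp.2 n := fun cp n d => by
    rw [instrPart_append, effect_append, effect_instrPart_periodAct, instrPart_powWord_blockAct,
      effect_opWord_incAt_add_decAt_eq_zero_iff, eq_comm]
  have hread : ∀ (cp : (Fin ws.length → ℕ) × List (Fin ws.length → ℕ)) n d,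
      readPart (periodAct (A := A) incAt cp.1 cp.2 n ++ powWord (blockAct ws decAt) d)
        = wordsPow ws d := fun cp n d => by
    rw [readPart_append, readPart_periodAct, readPart_powWord_blockAct, List.nil_append]
  ext w
  simp only [εNFA.counterLang, boundedSemilinearLang, Set.mem_ofPred_eq,
    mem_progsBDiLBd_accepts]
  constructor
  · rintro ⟨_, ⟨⟨cp, hcp, n, d, rfl⟩, h0⟩, rfl⟩
    exact ⟨d, ⟨cp, hcp, n, (hzero cp n d).1 h0⟩, hread cp n d⟩
  · rintro ⟨v, ⟨cp, hcp, n, rfl⟩, rfl⟩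
    exact ⟨_, ⟨⟨cp, hcp, n, _, rfl⟩, (hzero cp n _).2 rfl⟩, hread cp n _⟩

lemma instrPart_mem_instrsBDiLBd {α : List (A ⊕ Instr (ws.length + 1))}
    (hα : α ∈ (chainNFA (progsBDiLBd ws comps)).accepts) :
    instrPart α ∈ instrsBDiLBd ws comps := by
  obtain ⟨cp, hcp, n, d, rfl⟩ := (mem_progsBDiLBd_accepts ws comps).1 hα
  rw [instrPart_append, instrPart_powWord_blockAct]
  exact ⟨_, mem_boundedLang_flatMap hcp (instrPart_periodAct_mem _ _ _ n), _,
    powWord_singleton_mem_letterLang _ d, rfl⟩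

theorem boundedSemilinearLang_mem_NCMLang_famBDiLBd :
    boundedSemilinearLang ws comps ∈ NCMLang famBDiLBd A := by
  have hus := forall_mem_flatMap_periodWords (x := incAt) (p := Instr.isInc) (fun _ => trivial)
    comps
  have hbs : ∀ b ∈ List.ofFn (decAt (m := ws.length)), b.isDec :=
    List.forall_mem_ofFn_iff.2 fun _ => trivial
  refine ⟨ws.length + 1, ws.length.succ_pos, ?_⟩
  rw [← counterLang_progsBDiLBd]
  exact (chainNFA _).counterLang_mem_NCMLangK (boundedLang_mul_letterLang_mem_famBDiLBd hus hbs)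
    (boundedLang_mul_letterLang_le hus hbs) fun α hα => instrPart_mem_instrsBDiLBd ws comps hα

def progsLBiBDd : List (List (List (A ⊕ Instr (ws.length + 1)) × Bool)) :=
  comps.map fun cp => blockItems ws incAt ++ periodItems decAt cp.1 cp.2

def instrsLBiBDd : Language (Instr (ws.length + 1)) :=
  letterLang (List.ofFn incAt) * boundedLang (comps.flatMap fun cp => periodWords decAt cp.1 cp.2)

lemma mem_progsLBiBDd_accepts {α : List (A ⊕ Instr (ws.length + 1))} :
    α ∈ (chainNFA (progsLBiBDd ws comps)).accepts ↔ ∃ cp ∈ comps, ∃ n d,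
      α = powWord (blockAct ws incAt) d ++ periodAct decAt cp.1 cp.2 n := by
  simp only [progsLBiBDd, chainNFA_accepts, List.mem_map, exists_exists_and_eq_and,
    chainLang_append, blockItems, chainLang_ofFn_star]
  constructor
  · rintro ⟨cp, hcp, _, ⟨d, rfl⟩, _, hα, rfl⟩
    obtain ⟨n, rfl⟩ := mem_chainLang_periodItems.1 hα
    exact ⟨cp, hcp, n, d, rfl⟩
  · rintro ⟨cp, hcp, n, d, rfl⟩
    exact ⟨cp, hcp, _, ⟨d, rfl⟩, _, mem_chainLang_periodItems.2 ⟨n, rfl⟩, rfl⟩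

lemma counterLang_progsLBiBDd :
    (chainNFA (progsLBiBDd ws comps)).counterLang = boundedSemilinearLang ws comps := by
  have hzero : ∀ (cp : (Fin ws.length → ℕ) × List (Fin ws.length → ℕ)) n d,
      effect (instrPart (powWord (blockAct (A := A) ws incAt) d ++ periodAct decAt cp.1 cp.2 n))
        = 0 ↔ d = linearComb cp.1 cp.2 n := fun cp n d => by
    rw [instrPart_append, effect_append, effect_instrPart_periodAct, instrPart_powWord_blockAct,
      effect_opWord_incAt_add_decAt_eq_zero_iff]
  have hread : ∀ (cp : (Fin ws.length → ℕ) × List (Fin ws.length → ℕ)) n d,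
      readPart (powWord (blockAct (A := A) ws incAt) d ++ periodAct decAt cp.1 cp.2 n)
        = wordsPow ws d := fun cp n d => by
    rw [readPart_append, readPart_periodAct, readPart_powWord_blockAct, List.append_nil]
  ext w
  simp only [εNFA.counterLang, boundedSemilinearLang, Set.mem_ofPred_eq,
    mem_progsLBiBDd_accepts]
  constructor
  · rintro ⟨_, ⟨⟨cp, hcp, n, d, rfl⟩, h0⟩, rfl⟩
    exact ⟨d, ⟨cp, hcp, n, (hzero cp n d).1 h0⟩, hread cp n d⟩
  · rintro ⟨v, ⟨cp, hcp, n, rfl⟩, rfl⟩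
    exact ⟨_, ⟨⟨cp, hcp, n, _, rfl⟩, (hzero cp n _).2 rfl⟩, hread cp n _⟩

lemma instrPart_mem_instrsLBiBDd {α : List (A ⊕ Instr (ws.length + 1))}
    (hα : α ∈ (chainNFA (progsLBiBDd ws comps)).accepts) :
    instrPart α ∈ instrsLBiBDd ws comps := by
  obtain ⟨cp, hcp, n, d, rfl⟩ := (mem_progsLBiBDd_accepts ws comps).1 hα
  rw [instrPart_append, instrPart_powWord_blockAct]
  exact ⟨_, powWord_singleton_mem_letterLang _ d, _,
    mem_boundedLang_flatMap hcp (instrPart_periodAct_mem _ _ _ n), rfl⟩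

theorem boundedSemilinearLang_mem_NCMLang_famLBiBDd :
    boundedSemilinearLang ws comps ∈ NCMLang famLBiBDd A := by
  have has : ∀ a ∈ List.ofFn (incAt (m := ws.length)), a.isInc :=
    List.forall_mem_ofFn_iff.2 fun _ => trivial
  have hus := forall_mem_flatMap_periodWords (x := decAt) (p := Instr.isDec) (fun _ => trivial)
    comps
  refine ⟨ws.length + 1, ws.length.succ_pos, ?_⟩
  rw [← counterLang_progsLBiBDd]
  exact (chainNFA _).counterLang_mem_NCMLangK (letterLang_mul_boundedLang_mem_famLBiBDd has hus)
    (letterLang_mul_boundedLang_le has hus) fun α hα => instrPart_mem_instrsLBiBDd ws comps hα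

end BoundedSemilinear

theorem stmt14 {A : Type} (L : Language A) (h : IsBoundedSemilinear L) :
    L ∈ NCMLang famBDiLBd A ∧ L ∈ NCMLang famLBiBDd A := by
  obtain ⟨ws, -, Q, ⟨comps, rfl⟩, rfl⟩ := h
  exact ⟨boundedSemilinearLang_mem_NCMLang_famBDiLBd ws comps,
    boundedSemilinearLang_mem_NCMLang_famLBiBDd ws comps⟩
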